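/- arXiv:2207.00984 — 2 statements merged into one kernel-verified Lean document; each statement's English description precedes it below -/
import Mathlib

section
/- For any z ∈ ℝ^K and nonzero v ∈ ℝ^K, setting p_k = e^{z_k}/(∑_j e^{z_j}+1), we have (∑_k p_k v_k²)·(∑_k p_k + p_{K+1}) > (∑_k p_k v_k)², where p_{K+1} = 1/(∑_j e^{z_j}+1); consequently (∑_k e^{z_k}+1)·∑_k e^{z_k} v_k² > (∑_k e^{z_k} v_k)². -/
open Real Finset

theorem stmt_3 (K : ℕ) (z v : Fin K → ℝ) (hv : v ≠ 0) :
    let S : ℝ := ∑ j, Real.exp (z j) + 1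
    let p : Fin K → ℝ := fun k => Real.exp (z k) / S
    let pK1 : ℝ := 1 / S
    ((∑ k, p k * (v k) ^ 2) * ((∑ k, p k) + pK1) > (∑ k, p k * v k) ^ 2) ∧
      ((∑ k, Real.exp (z k) + 1) * (∑ k, Real.exp (z k) * (v k) ^ 2)
        > (∑ k, Real.exp (z k) * v k) ^ 2) := by
  intro S p pK1
  have hSpos : 0 < S := by
    have : 0 ≤ ∑ j, Real.exp (z j) :=
      Finset.sum_nonneg fun j _ => (Real.exp_pos _).le
    simp only [S]; linarith
  -- Cauchy-Schwarz with a k = sqrt (exp (z k))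
  have key : (∑ k, Real.exp (z k) * v k) ^ 2 ≤
      (∑ k, Real.exp (z k)) * (∑ k, Real.exp (z k) * (v k) ^ 2) := by
    have cs := Finset.sum_mul_sq_le_sq_mul_sq Finset.univ
      (fun k => Real.sqrt (Real.exp (z k)))
      (fun k => Real.sqrt (Real.exp (z k)) * v k)
    have e1 : ∀ k : Fin K, Real.sqrt (Real.exp (z k)) * (Real.sqrt (Real.exp (z k)) * v k)
        = Real.exp (z k) * v k := by
      intro k
      rw [← mul_assoc, Real.mul_self_sqrt (Real.exp_pos _).le]
    have e2 : ∀ k : Fin K, Real.sqrt (Real.exp (z k)) ^ 2 = Real.exp (z k) := fun k =>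
      Real.sq_sqrt (Real.exp_pos _).le
    have e3 : ∀ k : Fin K, (Real.sqrt (Real.exp (z k)) * v k) ^ 2
        = Real.exp (z k) * (v k) ^ 2 := by
      intro k
      rw [mul_pow, e2]
    simp only [e1, e2, e3] at cs
    exact cs
  have hpos : 0 < ∑ k, Real.exp (z k) * (v k) ^ 2 := by
    obtain ⟨k, hk⟩ : ∃ k, v k ≠ 0 := by
      by_contra h
      push_neg at h
      exact hv (funext h)
    refine Finset.sum_pos' (fun j _ => mul_nonneg (Real.exp_pos _).le (sq_nonneg _)) ⟨k, Finset.mem_univ k, ?_⟩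
    exact mul_pos (Real.exp_pos _) (lt_of_le_of_ne (sq_nonneg _) (Ne.symm (pow_ne_zero 2 hk)))
  have second : (∑ k, Real.exp (z k) + 1) * (∑ k, Real.exp (z k) * (v k) ^ 2)
      > (∑ k, Real.exp (z k) * v k) ^ 2 := by
    have : (∑ k, Real.exp (z k) + 1) * (∑ k, Real.exp (z k) * (v k) ^ 2)
        = (∑ k, Real.exp (z k)) * (∑ k, Real.exp (z k) * (v k) ^ 2)
          + (∑ k, Real.exp (z k) * (v k) ^ 2) := by ring
    rw [this]
    linarith
  refine ⟨?_, second⟩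
  have hps : (∑ k, p k * (v k) ^ 2) = (∑ k, Real.exp (z k) * (v k) ^ 2) / S := by
    simp only [p]
    rw [Finset.sum_div]
    congr 1; ext k; ring
  have hpv : (∑ k, p k * v k) = (∑ k, Real.exp (z k) * v k) / S := by
    simp only [p]
    rw [Finset.sum_div]
    congr 1; ext k; ring
  have hp1 : (∑ k, p k) + pK1 = 1 := by
    simp only [p, pK1]
    rw [← Finset.sum_div]
    field_simp [hSpos.ne']
    rfl
  rw [hps, hpv, hp1, mul_one, div_pow]
  rw [gt_iff_lt, div_lt_div_iff₀ (by positivity) hSpos]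
  have hSeq : S = ∑ k, Real.exp (z k) + 1 := rfl
  calc (∑ k, Real.exp (z k) * v k) ^ 2 * S
      < (∑ k, Real.exp (z k) + 1) * (∑ k, Real.exp (z k) * (v k) ^ 2) * S := by
        exact mul_lt_mul_of_pos_right second hSpos
    _ = (∑ k, Real.exp (z k) * (v k) ^ 2) * S ^ 2 := by rw [hSeq]; ring
end

section
/- Fix finite z_1,…,z_n ∈ ℝ^K. The function g(μ,Ω) = -(1/2)log det Ω + (1/(2n))∑_i (z_i-μ)ᵀΩ(z_i-μ) + λ‖Ω‖₁, with λ > 0, is coercive on ℝ^K × PD(K): g(μ,Ω) → ∞ whenever ‖μ‖ + ‖Ω‖ → ∞ or the smallest eigenvalue of Ω tends to 0. -/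
open Real Finset Matrix Filter

-- key analytic inequality: -(1/2) log t + a t ≥ (1/2) log (2a) + 1/2
lemma key_ineq (t a : ℝ) (ht : 0 < t) (ha : 0 < a) :
    1/2 * Real.log (2*a) + 1/2 ≤ -(1/2) * Real.log t + a * t := by
  have h := Real.log_le_sub_one_of_pos (mul_pos (mul_pos two_pos ha) ht)
  rw [Real.log_mul (by positivity) ht.ne'] at h
  nlinarith

lemma quad_lower {K : ℕ} {A : Matrix (Fin K) (Fin K) ℝ} (hA : A.IsHermitian) {c : ℝ}
    (hc : ∀ j, c ≤ hA.eigenvalues j) (x : Fin K → ℝ) :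
    c * ∑ k, x k ^ 2 ≤ ∑ k, ∑ l, x k * A k l * x l := by
  have hps : (A - c • 1).PosSemidef := by
    have h1 : A - c • 1 =
        (hA.eigenvectorUnitary : Matrix (Fin K) (Fin K) ℝ) *
          (diagonal (fun j => hA.eigenvalues j - c)) *
          star (hA.eigenvectorUnitary : Matrix (Fin K) (Fin K) ℝ) := by
      nth_rewrite 1 [hA.spectral_theorem]
      rw [Unitary.conjStarAlgAut_apply]
      have hU : (hA.eigenvectorUnitary : Matrix (Fin K) (Fin K) ℝ) *
          star (hA.eigenvectorUnitary : Matrix (Fin K) (Fin K) ℝ) = 1 :=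
        (Matrix.mem_unitaryGroup_iff).mp hA.eigenvectorUnitary.2
      have : (diagonal (fun j => hA.eigenvalues j - c) : Matrix (Fin K) (Fin K) ℝ)
          = diagonal (RCLike.ofReal ∘ hA.eigenvalues) - c • 1 := by
        simp [Matrix.smul_one_eq_diagonal, Matrix.diagonal_sub, Function.comp]
      rw [this, Matrix.mul_sub, Matrix.sub_mul, Matrix.mul_smul, Matrix.smul_mul, mul_one, hU]
    rw [h1]
    exact (posSemidef_diagonal_iff.mpr fun j => sub_nonneg.mpr (hc j)).mul_mul_conjTranspose_same _
  have h2 := hps.dotProduct_mulVec_nonneg x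
  have h3 : dotProduct (star x) ((A - c • 1) *ᵥ x)
      = (∑ k, ∑ l, x k * A k l * x l) - c * ∑ k, x k ^ 2 := by
    simp only [Matrix.sub_mulVec, dotProduct_sub, star_trivial, Matrix.smul_mulVec,
      Matrix.one_mulVec, dotProduct_smul, smul_eq_mul]
    congr 1
    · simp [dotProduct, mulVec, Finset.mul_sum, mul_assoc]
    · simp [dotProduct, sq]
  linarith [h3 ▸ h2]

lemma trace_eq_sum_eigs {K : ℕ} {A : Matrix (Fin K) (Fin K) ℝ} (hA : A.IsHermitian) :
    ∑ i, A i i = ∑ i, hA.eigenvalues i := by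
  have hU : star (hA.eigenvectorUnitary : Matrix (Fin K) (Fin K) ℝ) *
      (hA.eigenvectorUnitary : Matrix (Fin K) (Fin K) ℝ) = 1 :=
    (Matrix.mem_unitaryGroup_iff').mp hA.eigenvectorUnitary.2
  have : ∑ i, A i i = A.trace := by simp [Matrix.trace, Matrix.diag]
  rw [this]
  nth_rewrite 1 [hA.spectral_theorem]
  rw [Unitary.conjStarAlgAut_apply]
  rw [Matrix.trace_mul_cycle, hU, Matrix.one_mul]
  simp [Matrix.trace, Matrix.diag, Function.comp]

lemma sum_lower {K : ℕ} (f : Fin K → ℝ) (c : ℝ) (hc : ∀ j, c ≤ f j) (j₀ : Fin K) (φ : ℝ)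
    (hφ : φ ≤ f j₀) : (K - 1 : ℕ) * c + φ ≤ ∑ j, f j := by
  rw [← Finset.add_sum_erase _ f (Finset.mem_univ j₀)]
  have hcard : (Finset.univ.erase j₀).card = K - 1 := by
    rw [Finset.card_erase_of_mem (Finset.mem_univ j₀)]; simp
  have := Finset.card_nsmul_le_sum (Finset.univ.erase j₀) f c (fun j _ => hc j)
  rw [hcard, nsmul_eq_mul] at this
  linarith

theorem stmt_15 (K n : ℕ) (hK : 0 < K) (hn : 0 < n)
    (z : Fin n → EuclideanSpace ℝ (Fin K)) (lam : ℝ) (hlam : 0 < lam)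
    (g : EuclideanSpace ℝ (Fin K) → Matrix (Fin K) (Fin K) ℝ → ℝ)
    (hg : ∀ μ Ω, g μ Ω = -(1/2 : ℝ) * Real.log Ω.det
      + (1 / (2 * (n : ℝ))) * ∑ i, ∑ k, ∑ l, (z i k - μ k) * Ω k l * (z i l - μ l)
      + lam * ∑ i, ∑ j, |Ω i j|)
    (μseq : ℕ → EuclideanSpace ℝ (Fin K))
    (Ωseq : ℕ → Matrix (Fin K) (Fin K) ℝ)
    (hPD : ∀ m, (Ωseq m).PosDef)
    (hdiv : Tendsto (fun m => ‖μseq m‖) atTop atTop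
      ∨ Tendsto (fun m => ⨆ i, (hPD m).1.eigenvalues i) atTop atTop
      ∨ Tendsto (fun m => ⨅ i, (hPD m).1.eigenvalues i) atTop (nhds 0)) :
    Tendsto (fun m => g (μseq m) (Ωseq m)) atTop atTop := by
  haveI : Nonempty (Fin K) := ⟨⟨0, hK⟩⟩
  set E : ℕ → Fin K → ℝ := fun m => (hPD m).1.eigenvalues with hE
  have Epos : ∀ m j, 0 < E m j := fun m j => (hPD m).eigenvalues_pos j
  have hinf_le : ∀ m j, (⨅ i, E m i) ≤ E m j :=
    fun m j => ciInf_le (Set.finite_range _).bddBelow j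
  have hmin : ∀ m, ∃ j₀ : Fin K, (⨅ i, E m i) = E m j₀ := by
    intro m
    obtain ⟨j₀, hj₀⟩ := Finite.exists_min (E m)
    exact ⟨j₀, le_antisymm (hinf_le m j₀) (le_ciInf hj₀)⟩
  have hmax : ∀ m, ∃ j₀ : Fin K, (⨆ i, E m i) = E m j₀ := by
    intro m
    obtain ⟨j₀, hj₀⟩ := Finite.exists_max (E m)
    exact ⟨j₀, le_antisymm (ciSup_le hj₀) (le_ciSup (Set.finite_range _).bddAbove j₀)⟩
  have heminpos : ∀ m, 0 < ⨅ i, E m i := by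
    intro m; obtain ⟨j₀, hj₀⟩ := hmin m; rw [hj₀]; exact Epos m j₀
  set Q : ℕ → ℝ := fun m => (1 / (2 * (n : ℝ))) * ∑ i, ∑ k, (z i k - μseq m k) ^ 2 with hQ
  have hQnonneg : ∀ m, 0 ≤ Q m := by intro m; positivity
  set c₀ : ℝ := 1/2 * Real.log (2*lam) + 1/2 with hc₀
  have hc₀le : ∀ m j, c₀ ≤ -(1/2) * Real.log (E m j) + lam * E m j :=
    fun m j => key_ineq _ _ (Epos m j) hlam
  -- master lower bound
  have hmaster : ∀ m, (∑ j, (-(1/2) * Real.log (E m j) + lam * E m j)) + (⨅ i, E m i) * Q m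
      ≤ g (μseq m) (Ωseq m) := by
    intro m
    rw [hg]
    have hA : -(1/2 : ℝ) * Real.log (Ωseq m).det = ∑ j, -(1/2) * Real.log (E m j) := by
      rw [(hPD m).1.det_eq_prod_eigenvalues, ← Finset.mul_sum,
        Real.log_prod (fun j _ => by exact_mod_cast (Epos m j).ne')]
      norm_num [hE]
    have hB : (⨅ i, E m i) * Q m ≤ (1 / (2 * (n : ℝ)))
        * ∑ i, ∑ k, ∑ l, (z i k - μseq m k) * Ωseq m k l * (z i l - μseq m l) := by
      have h1 : (⨅ i, E m i) * Q m
          = (1 / (2 * (n : ℝ))) * ∑ i, ((⨅ i, E m i) * ∑ k, (z i k - μseq m k) ^ 2) := by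
        rw [← Finset.mul_sum, hQ]; ring
      rw [h1]
      gcongr with i _
      · exact quad_lower (hPD m).1 (hinf_le m) _
    have hC : ∑ j, lam * E m j ≤ lam * ∑ i, ∑ j, |Ωseq m i j| := by
      rw [← Finset.mul_sum]
      refine mul_le_mul_of_nonneg_left ?_ hlam.le
      calc ∑ j, E m j = ∑ i, Ωseq m i i := (trace_eq_sum_eigs (hPD m).1).symm
        _ ≤ ∑ i, ∑ j, |Ωseq m i j| := Finset.sum_le_sum fun i _ =>
            le_trans (le_abs_self _)
              (Finset.single_le_sum (f := fun j => |Ωseq m i j|) (fun j _ => abs_nonneg _) (Finset.mem_univ i))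
    rw [Finset.sum_add_distrib, hA]
    linarith
  rcases hdiv with hμ | hsup | hinf0
  · -- ‖μ‖ → ∞
    have hns : ∀ (x y : EuclideanSpace ℝ (Fin K)), ∑ k, (x k - y k) ^ 2 = ‖x - y‖ ^ 2 := by
      intro x y
      rw [EuclideanSpace.norm_eq, Real.sq_sqrt (by positivity)]
      simp [Real.norm_eq_abs, sq_abs]
    refine tendsto_atTop_mono' atTop (f₁ := fun m => ((K:ℝ)-1)*c₀
      + 1/2 * Real.log (2 * ((1/(2*(n:ℝ))) * (‖μseq m‖ - ‖z ⟨0,hn⟩‖)^2)) + 1/2) ?_ ?_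
    · filter_upwards [hμ.eventually_ge_atTop (‖z ⟨0, hn⟩‖ + 1)] with m hm
      obtain ⟨j₀, hj₀⟩ := hmin m
      set q : ℝ := (1 / (2 * (n : ℝ))) * (‖μseq m‖ - ‖z ⟨0, hn⟩‖) ^ 2 with hq
      have hd1 : (1 : ℝ) ≤ ‖μseq m‖ - ‖z ⟨0, hn⟩‖ := by linarith
      have hqpos : 0 < q := by rw [hq]; positivity
      have hqQ : q ≤ Q m := by
        rw [hq, hQ]
        refine mul_le_mul_of_nonneg_left ?_ (by positivity)
        calc (‖μseq m‖ - ‖z ⟨0, hn⟩‖) ^ 2 ≤ ‖z ⟨0, hn⟩ - μseq m‖ ^ 2 := by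
              have : ‖μseq m‖ - ‖z ⟨0, hn⟩‖ ≤ ‖z ⟨0, hn⟩ - μseq m‖ := by
                rw [norm_sub_rev]
                exact le_trans (norm_sub_norm_le _ _) le_rfl
              exact pow_le_pow_left₀ (by linarith) this 2
          _ = ∑ k, (z ⟨0, hn⟩ k - μseq m k) ^ 2 := (hns _ _).symm
          _ ≤ ∑ i, ∑ k, (z i k - μseq m k) ^ 2 :=
              Finset.single_le_sum (f := fun i => ∑ k, (z i k - μseq m k) ^ 2)
                (fun i _ => by positivity) (Finset.mem_univ _)
      have hkey := key_ineq (E m j₀) (lam + Q m) (Epos m j₀)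
        (by positivity)
      have hlog : Real.log (2 * q) ≤ Real.log (2 * (lam + Q m)) :=
        Real.log_le_log (by positivity) (by linarith)
      have hsum : ((K : ℝ) - 1) * c₀ + (-(1/2) * Real.log (E m j₀) + lam * E m j₀)
          ≤ ∑ j, (-(1/2) * Real.log (E m j) + lam * E m j) := by
        have := sum_lower (fun j => -(1/2) * Real.log (E m j) + lam * E m j) c₀
          (hc₀le m) j₀ _ le_rfl
        have hcast : ((K - 1 : ℕ) : ℝ) = (K : ℝ) - 1 := by
          have : 1 ≤ K := hK
          push_cast [this]; ring
        rw [hcast] at this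
        exact this
      have hQmul : (⨅ i, E m i) * Q m = E m j₀ * Q m := by rw [hj₀]
      have := hmaster m
      nlinarith [hkey, hsum, hQmul, hlog]
    · have t1 : Tendsto (fun m => ‖μseq m‖ - ‖z ⟨0, hn⟩‖) atTop atTop :=
        tendsto_atTop_add_const_right atTop (-‖z ⟨0, hn⟩‖) hμ
      have t2 : Tendsto (fun m => (‖μseq m‖ - ‖z ⟨0, hn⟩‖) ^ 2) atTop atTop :=
        (tendsto_pow_atTop two_ne_zero).comp t1
      have t3 : Tendsto (fun m => 2 * ((1 / (2 * (n : ℝ)))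
          * (‖μseq m‖ - ‖z ⟨0, hn⟩‖) ^ 2)) atTop atTop := by
        have h2n : (0:ℝ) < 2 * (1 / (2 * (n : ℝ))) := by positivity
        have := t2.const_mul_atTop h2n
        convert this using 2 with m
        ring
      have t4 := Real.tendsto_log_atTop.comp t3
      have t5 : Tendsto (fun m => 1/2 * Real.log (2 * ((1 / (2 * (n : ℝ)))
          * (‖μseq m‖ - ‖z ⟨0, hn⟩‖) ^ 2))) atTop atTop :=
        t4.const_mul_atTop (by norm_num)
      exact tendsto_atTop_add_const_right _ _
        (tendsto_atTop_add_const_left _ _ t5)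
  · -- λ_max → ∞
    refine tendsto_atTop_mono (f := fun m => ((K:ℝ)-1)*c₀
      + (lam/2 * (⨆ i, E m i) + (1/2 * Real.log lam + 1/2))) ?_ ?_
    · intro m
      obtain ⟨j₀, hj₀⟩ := hmax m
      have hkey := key_ineq (E m j₀) (lam/2) (Epos m j₀) (by positivity)
      have hsum : ((K : ℝ) - 1) * c₀
          + (-(1/2) * Real.log (E m j₀) + lam * E m j₀)
          ≤ ∑ j, (-(1/2) * Real.log (E m j) + lam * E m j) := by
        have := sum_lower (fun j => -(1/2) * Real.log (E m j) + lam * E m j) c₀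
          (hc₀le m) j₀ _ le_rfl
        have hcast : ((K - 1 : ℕ) : ℝ) = (K : ℝ) - 1 := by
          have : 1 ≤ K := hK
          push_cast [this]; ring
        rw [hcast] at this
        exact this
      have hQm := mul_nonneg (heminpos m).le (hQnonneg m)
      have hm := hmaster m
      have h22 : 2 * (lam/2) = lam := by ring
      rw [h22] at hkey
      show ((K : ℝ) - 1) * c₀ + (lam/2 * (⨆ i, E m i)
        + (1/2 * Real.log lam + 1/2)) ≤ g (μseq m) (Ωseq m)
      rw [hj₀]
      nlinarith
    · refine tendsto_atTop_add_const_left _ _ ?_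
      refine tendsto_atTop_add_const_right _ _ ?_
      exact hsup.const_mul_atTop (by positivity)
  · -- λ_min → 0
    refine tendsto_atTop_mono (f := fun m => ((K:ℝ)-1)*c₀
      + -(1/2) * Real.log (⨅ i, E m i)) ?_ ?_
    · intro m
      obtain ⟨j₀, hj₀⟩ := hmin m
      have hsum : ((K : ℝ) - 1) * c₀
          + (-(1/2) * Real.log (E m j₀) + lam * E m j₀)
          ≤ ∑ j, (-(1/2) * Real.log (E m j) + lam * E m j) := by
        have := sum_lower (fun j => -(1/2) * Real.log (E m j) + lam * E m j) c₀
          (hc₀le m) j₀ _ le_rfl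
        have hcast : ((K - 1 : ℕ) : ℝ) = (K : ℝ) - 1 := by
          have : 1 ≤ K := hK
          push_cast [this]; ring
        rw [hcast] at this
        exact this
      have hQm := mul_nonneg (heminpos m).le (hQnonneg m)
      have hm := hmaster m
      have hle : lam * E m j₀ ≥ 0 := mul_nonneg hlam.le (Epos m j₀).le
      show ((K : ℝ) - 1) * c₀ + -(1/2) * Real.log (⨅ i, E m i) ≤ g (μseq m) (Ωseq m)
      rw [hj₀]
      nlinarith
    · refine tendsto_atTop_add_const_left _ _ ?_
      have hlog : Tendsto (fun m => Real.log (⨅ i, E m i)) atTop atBot := by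
        refine Real.tendsto_log_nhdsGT_zero.comp ?_
        rw [tendsto_nhdsWithin_iff]
        exact ⟨hinf0, Filter.Eventually.of_forall fun m => heminpos m⟩
      exact hlog.const_mul_atBot_of_neg (r := -(1/2)) (by norm_num)
end
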